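/- arXiv:2108.10725 — 2 statements merged into one kernel-verified Lean document; each statement's English description precedes it below -/
import Mathlib

section
/- Let σ, ν be Minkowski velocities with ⟨σ,ν⟩ > 0. Then the active covariant Lorentz boost inverts the passive one: for every μ ∈ ℝ⁴, La(σ,ν)(Lp(σ,ν)μ) = μ. Equivalently, swapping the two parameterizing Minkowski velocities gives the inverse transformation: Lp(ν,σ)(Lp(σ,ν)μ) = μ. -/
/-!
Write `w = ν + σ` and `d = ⟨σ, w⟩`. For Minkowski velocities `⟨ν, w⟩ = d`, so
`⟨w, w⟩ = 2d`. The passive boost therefore satisfies `⟨Lp μ, σ⟩ = ⟨μ, ν⟩` and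
`⟨Lp μ, w⟩ = -⟨μ, w⟩ + 2d⟨μ, ν⟩/c²`; substituting both into the active boost cancels
every term but `μ`. Since `⟨ν, w⟩ = ⟨σ, w⟩`, swapping the parameters of the passive boost
yields the active one.
-/

noncomputable section

/-- Minkowski bilinear form on ℝ⁴ with signature +−−−. -/
def mink (u v : Fin 4 → ℝ) : ℝ := u 0 * v 0 - u 1 * v 1 - u 2 * v 2 - u 3 * v 3

/-- Passive covariant Lorentz boost determined by Minkowski velocities σ, ν. -/
def Lp (c : ℝ) (σ ν μ : Fin 4 → ℝ) : Fin 4 → ℝ :=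
  μ - (mink μ (ν + σ) / mink σ (ν + σ)) • (ν + σ) + (2 * mink μ ν / c ^ 2) • σ

/-- Active covariant Lorentz boost determined by Minkowski velocities σ, ν. -/
def La (c : ℝ) (σ ν μ : Fin 4 → ℝ) : Fin 4 → ℝ :=
  μ - (mink μ (ν + σ) / mink σ (ν + σ)) • (ν + σ) + (2 * mink μ σ / c ^ 2) • ν

lemma mink_comm (u v : Fin 4 → ℝ) : mink u v = mink v u := by
  simp only [mink]; ring

lemma mink_add_left (u v w : Fin 4 → ℝ) : mink (u + v) w = mink u w + mink v w := by
  simp only [mink, Pi.add_apply]; ring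

lemma mink_sub_left (u v w : Fin 4 → ℝ) : mink (u - v) w = mink u w - mink v w := by
  simp only [mink, Pi.sub_apply]; ring

lemma mink_smul_left (r : ℝ) (u w : Fin 4 → ℝ) : mink (r • u) w = r * mink u w := by
  simp only [mink, Pi.smul_apply, smul_eq_mul]; ring

lemma mink_add_right (u v w : Fin 4 → ℝ) : mink u (v + w) = mink u v + mink u w := by
  rw [mink_comm, mink_add_left, mink_comm v, mink_comm w]

section Velocities

variable {c : ℝ} {σ ν : Fin 4 → ℝ}

lemma mink_add_self_left_eq_right (hσ : mink σ σ = c ^ 2) (hν : mink ν ν = c ^ 2) :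
    mink ν (ν + σ) = mink σ (ν + σ) := by
  rw [mink_add_right, mink_add_right, hσ, hν, mink_comm ν σ, add_comm]

lemma mink_add_self_self (hσ : mink σ σ = c ^ 2) (hν : mink ν ν = c ^ 2) :
    mink (ν + σ) (ν + σ) = 2 * mink σ (ν + σ) := by
  rw [mink_add_left, mink_add_self_left_eq_right hσ hν, two_mul]

lemma mink_Lp_param (hc : c ≠ 0) (hσ : mink σ σ = c ^ 2) (hd : mink σ (ν + σ) ≠ 0)
    (μ : Fin 4 → ℝ) : mink (Lp c σ ν μ) σ = mink μ ν := by
  have hσw : mink (ν + σ) σ = mink σ (ν + σ) := mink_comm _ _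
  simp only [Lp, mink_add_left, mink_sub_left, mink_smul_left, hσw, hσ]
  rw [mink_add_right, mink_comm μ ν, mink_comm μ σ]
  field_simp
  ring

lemma mink_Lp_param_add (hσ : mink σ σ = c ^ 2) (hν : mink ν ν = c ^ 2)
    (hd : mink σ (ν + σ) ≠ 0) (μ : Fin 4 → ℝ) :
    mink (Lp c σ ν μ) (ν + σ) =
      -mink μ (ν + σ) + 2 * mink μ ν / c ^ 2 * mink σ (ν + σ) := by
  simp only [Lp, mink_add_left, mink_sub_left, mink_smul_left, mink_add_self_self hσ hν]
  field_simp
  ring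

theorem La_Lp (hc : c ≠ 0) (hσ : mink σ σ = c ^ 2) (hν : mink ν ν = c ^ 2)
    (hd : mink σ (ν + σ) ≠ 0) (μ : Fin 4 → ℝ) : La c σ ν (Lp c σ ν μ) = μ := by
  have hcoeff :
      (-mink μ (ν + σ) + 2 * mink μ ν / c ^ 2 * mink σ (ν + σ)) / mink σ (ν + σ) =
        -(mink μ (ν + σ) / mink σ (ν + σ)) + 2 * mink μ ν / c ^ 2 := by
    field_simp
  rw [La, mink_Lp_param_add hσ hν hd, mink_Lp_param hc hσ hd, hcoeff, Lp]
  module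

theorem Lp_swap_params (hσ : mink σ σ = c ^ 2) (hν : mink ν ν = c ^ 2) (μ : Fin 4 → ℝ) :
    Lp c ν σ μ = La c σ ν μ := by
  rw [Lp, La, add_comm σ ν, mink_add_self_left_eq_right hσ hν]

end Velocities

theorem active_inverts_passive (c : ℝ) (hc : 0 < c) (σ ν : Fin 4 → ℝ)
    (hσ : mink σ σ = c ^ 2) (hν : mink ν ν = c ^ 2)
    (hσν : 0 < mink σ ν) :
    ∀ μ : Fin 4 → ℝ,
      La c σ ν (Lp c σ ν μ) = μ ∧ Lp c ν σ (Lp c σ ν μ) = μ := by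
  have hd : mink σ (ν + σ) ≠ 0 := by
    rw [mink_add_right, hσ]
    positivity
  intro μ
  have hinv := La_Lp hc.ne' hσ hν hd μ
  exact ⟨hinv, by rwa [Lp_swap_params hσ hν]⟩
end
end

section
/- Let σ, ν be Minkowski velocities with ⟨σ,ν⟩ > 0, and let ν̃ := 2(⟨σ,ν⟩/c²)·σ − ν be the velocity opposite to ν in the three-dimensional sense. Then the passive boost with the opposite velocity equals the active boost: for every μ ∈ ℝ⁴, Lp(σ,ν̃)μ = La(σ,ν)μ. -/
/-!
Write `t = 2⟨σ,ν⟩/⟨σ,σ⟩`, so that `ν̃ = tσ - ν`. Since `⟨σ,ν̃⟩ = ⟨σ,ν⟩`, both boosts divide by the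
same denominator `⟨σ,ν+σ⟩`, and both sides are combinations of `μ`, `σ`, `ν` whose coefficients
agree by a rational-function identity in `⟨σ,σ⟩`, `⟨σ,ν⟩`, `⟨μ,σ⟩`, `⟨μ,ν⟩`.
-/

noncomputable section

namespace LinearMap.BilinForm

variable {K V : Type*} [Field K] [AddCommGroup V] [Module K V] (B : LinearMap.BilinForm K V)

theorem apply_opposite_add_self {σ : V} (hσ : B σ σ ≠ 0) (ν : V) :
    B σ ((2 * B σ ν / B σ σ) • σ - ν + σ) = B σ (ν + σ) := by
  simp only [map_add, map_sub, map_smul, smul_eq_mul]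
  field_simp
  ring

theorem passive_boost_opposite_eq_active_boost {σ ν : V} (hσ : B σ σ ≠ 0)
    (hσν : B σ σ + B σ ν ≠ 0) (μ : V) :
    let ν' := ((2 : K) * B σ ν / B σ σ) • σ - ν
    μ - (B μ (ν' + σ) / B σ (ν' + σ)) • (ν' + σ) + (2 * B μ ν' / B σ σ) • σ =
      μ - (B μ (ν + σ) / B σ (ν + σ)) • (ν + σ) + (2 * B μ σ / B σ σ) • ν := by
  intro ν'
  have hden : B σ (ν + σ) ≠ 0 := by rwa [map_add, add_comm]
  rw [B.apply_opposite_add_self hσ]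
  simp only [ν', map_add, map_sub, map_smul, smul_eq_mul] at hden ⊢
  match_scalars <;> field_simp <;> ring

end LinearMap.BilinForm

def minkForm : LinearMap.BilinForm ℝ (Fin 4 → ℝ) :=
  Matrix.toBilin' (Matrix.diagonal ![1, -1, -1, -1])

theorem minkForm_apply (u v : Fin 4 → ℝ) : minkForm u v = mink u v := by
  simp only [minkForm, Matrix.toBilin'_apply', dotProduct, Matrix.mulVec_diagonal,
    Fin.sum_univ_four, Matrix.cons_val_zero, Matrix.cons_val_one, Matrix.cons_val, one_mul,
    neg_mul, mul_neg, mink]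
  ring

theorem passive_opposite_eq_active_general (c : ℝ) (hc : 0 < c) (σ ν : Fin 4 → ℝ)
    (hσ : mink σ σ = c ^ 2)
    (hσν : 0 < mink σ ν) :
    ∀ μ : Fin 4 → ℝ,
      Lp c σ ((2 * mink σ ν / c ^ 2) • σ - ν) μ = La c σ ν μ := by
  intro μ
  have hσσ : minkForm σ σ ≠ 0 := by rw [minkForm_apply, hσ]; positivity
  have hσσν : minkForm σ σ + minkForm σ ν ≠ 0 := by
    rw [minkForm_apply, minkForm_apply, hσ]; positivity
  simpa only [Lp, La, ← hσ, ← minkForm_apply] using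
    LinearMap.BilinForm.passive_boost_opposite_eq_active_boost minkForm hσσ hσσν μ

theorem passive_opposite_eq_active (c : ℝ) (hc : 0 < c) (σ ν : Fin 4 → ℝ)
    (hσ : mink σ σ = c ^ 2) (hν : mink ν ν = c ^ 2)
    (hσν : 0 < mink σ ν) :
    ∀ μ : Fin 4 → ℝ,
      Lp c σ ((2 * mink σ ν / c ^ 2) • σ - ν) μ = La c σ ν μ :=
  passive_opposite_eq_active_general c hc σ ν hσ hσν
end
end
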